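/- arXiv:1109.6479 — 3 statements merged into one kernel-verified Lean document; each statement's English description precedes it below -/
import Mathlib

section
/- Let H₀ be a finite-rank free ℤ-module, K a commutative ring with unit, H = H₀ ⊗ K, and T̂ = ∏_{m≥0} H^{⊗m} the completed tensor algebra. If X' ∈ H₀ is a primitive element (i.e. part of some ℤ-basis, equivalently H₀/ℤX' is torsion-free) and X = X' ⊗ 1 ∈ H, then the centralizer of X in T̂ equals the ring K[[X]] of formal power series in X: {u ∈ T̂ : Xu = uX} = K[[X]]. -/
/-! We model the completed tensor algebra `T̂ = ∏ₘ H^{⊗m}` of a free module `H`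
with basis `ι` concretely: an element of `T̂` is a function assigning to each
word in the alphabet `ι` (a basis element of `H^{⊗m}`, `m` the length) its
coefficient.  Addition and scalar multiplication are pointwise, and
multiplication is the (componentwise finite) convolution over splittings of a
word, i.e. the completed tensor product multiplication. -/

/-- The completed tensor algebra on the free module with basis `ι`,
coefficients in `K`. -/
abbrev NCSeries (ι K : Type*) := List ι → K

variable {ι K : Type*} [CommRing K]

/-- The unit of `T̂`. -/
def oneNC : NCSeries ι K := fun w =>
  match w with
  | [] => 1
  | _ => 0

/-- The multiplication of `T̂`. -/
def mulNC (f g : NCSeries ι K) : NCSeries ι K := fun w =>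
  ∑ k ∈ Finset.range (w.length + 1), f (w.take k) * g (w.drop k)

/-- Powers in `T̂`. -/
def pwNC (X : NCSeries ι K) : ℕ → NCSeries ι K
  | 0 => oneNC
  | n + 1 => mulNC X (pwNC X n)

/-- The element of `T̂` of degree 1 determined by an element `X'` of the free
`ℤ`-module `H₀ = ι →₀ ℤ`, i.e. the image `X = X' ⊗ 1 ∈ H ⊆ T̂`. -/
def degreeOne (X' : ι →₀ ℤ) : NCSeries ι K := fun w =>
  match w with
  | [i] => (X' i : K)
  | _ => 0

/-- The formal power series `Σₙ aₙ Xⁿ ∈ K[[X]]` (the sum is componentwise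
finite whenever `X` has vanishing constant term, as the truncation at the
length of the word shows). -/
def seriesInNC (a : ℕ → K) (X : NCSeries ι K) : NCSeries ι K := fun w =>
  ∑ n ∈ Finset.range (w.length + 1), a n * pwNC X n w

/-! An element `u` of `T̂` commutes with `X = ∑ᵢ xᵢ eᵢ` iff `xᵢ u(t j) = xⱼ u(i t)` for all
letters `i, j` and words `t`. Iterating this moves whole words from one end to the other,
so `x^v u(w) = x^w u(v)` whenever `|v| = |w|`, where `x^w` is the product of the `x`'s along `w`.
Primitivity gives `m` with `∑ᵢ mᵢ xᵢ = 1`, hence `∑_{|v| = n} m^v x^v = 1`, and so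
`u(w) = ∑_{|v| = |w|} m^v x^v u(w) = (∑_{|v| = |w|} m^v u(v)) x^w`, which is the coefficient
of `X^{|w|}` at `w` times a scalar depending only on `|w|`. -/

section WordProducts

variable {R : Type*} [CommSemiring R]

theorem prod_map_mul_apply_append_swap {x : ι → R} {u : List ι → R}
    (hu : ∀ i t j, x i * u (t ++ [j]) = x j * u (i :: t)) {v w : List ι}
    (hvw : v.length = w.length) (s : List ι) :
    (v.map x).prod * u (s ++ w) = (w.map x).prod * u (v ++ s) := by
  induction v using List.reverseRecOn generalizing s w with
  | nil => simp [List.length_eq_zero_iff.mp hvw.symm]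
  | append_singleton v i ih =>
    obtain rfl | ⟨w, j, rfl⟩ := w.eq_nil_or_concat'
    · simp at hvw
    have hvw : v.length = w.length := by simpa using hvw
    calc ((v ++ [i]).map x).prod * u (s ++ (w ++ [j]))
        = (v.map x).prod * (x i * u ((s ++ w) ++ [j])) := by
          simp only [List.map_append, List.prod_append, List.map_singleton, List.prod_singleton,
            List.append_assoc]
          ring
      _ = (v.map x).prod * (x j * u ((i :: s) ++ w)) := by rw [hu]; rfl
      _ = x j * ((w.map x).prod * u (v ++ (i :: s))) := by rw [← ih hvw (i :: s)]; ring
      _ = ((w ++ [j]).map x).prod * u ((v ++ [i]) ++ s) := by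
          simp only [List.map_append, List.prod_append, List.map_singleton, List.prod_singleton,
            List.append_assoc, List.singleton_append]
          ring

theorem sum_prod_mul_prod_map_ofFn [Fintype ι] (m x : ι → R) (n : ℕ) :
    ∑ f : Fin n → ι, (∏ k, m (f k)) * ((List.ofFn f).map x).prod = (∑ i, m i * x i) ^ n := by
  simp only [Fintype.sum_pow, List.map_ofFn, List.prod_ofFn, Function.comp_apply,
    Finset.prod_mul_distrib]

theorem apply_eq_sum_mul_prod_map [Fintype ι] {m x : ι → R} (hmx : ∑ i, m i * x i = 1)
    {u : List ι → R}
    (hu : ∀ v w : List ι, v.length = w.length → (v.map x).prod * u w = (w.map x).prod * u v)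
    (w : List ι) :
    u w = (∑ f : Fin w.length → ι, (∏ k, m (f k)) * u (List.ofFn f)) * (w.map x).prod :=
  calc u w = (∑ i, m i * x i) ^ w.length * u w := by rw [hmx, one_pow, one_mul]
    _ = ∑ f : Fin w.length → ι, (∏ k, m (f k)) * (((List.ofFn f).map x).prod * u w) := by
      rw [← sum_prod_mul_prod_map_ofFn, Finset.sum_mul]
      simp only [mul_assoc]
    _ = _ := by
      rw [Finset.sum_mul]
      refine Finset.sum_congr rfl fun f _ => ?_
      rw [hu _ _ (List.length_ofFn ..)]
      ring

end WordProducts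

theorem exists_sum_mul_eq_one_of_primitive {R : Type*} [Ring R] [Fintype ι] {X' : ι →₀ ℤ}
    (hX : ∃ φ : (ι →₀ ℤ) →ₗ[ℤ] ℤ, φ X' = 1) : ∃ m : ι → R, ∑ i, m i * (X' i : R) = 1 := by
  obtain ⟨φ, hφ⟩ := hX
  have hsum : ∑ i, φ (Finsupp.single i 1) * X' i = φ X' := by
    conv_rhs => rw [← Finsupp.univ_sum_single X', map_sum]
    refine Finset.sum_congr rfl fun i _ => ?_
    rw [← Finsupp.smul_single_one i (X' i), map_smul, smul_eq_mul, mul_comm]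
  refine ⟨fun i => (φ (Finsupp.single i 1) : R), ?_⟩
  simpa using congrArg (Int.cast : ℤ → R) (hsum.trans hφ)

section DegreeOne

variable (X' : ι →₀ ℤ)

theorem degreeOne_apply_of_length_ne_one {w : List ι} (h : w.length ≠ 1) :
    degreeOne (K := K) X' w = 0 := by
  match w with
  | [] => rfl
  | [_] => simp at h
  | _ :: _ :: _ => rfl

theorem degreeOne_mulNC_apply_nil (g : NCSeries ι K) : mulNC (degreeOne X') g [] = 0 := by
  simp [mulNC, degreeOne_apply_of_length_ne_one]

theorem mulNC_degreeOne_apply_nil (g : NCSeries ι K) : mulNC g (degreeOne X') [] = 0 := by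
  simp [mulNC, degreeOne_apply_of_length_ne_one]

theorem degreeOne_mulNC_apply_cons (g : NCSeries ι K) (i : ι) (t : List ι) :
    mulNC (degreeOne X') g (i :: t) = (X' i : K) * g t := by
  rw [mulNC, Finset.sum_eq_single_of_mem 1 (by simp)]
  · rfl
  · intro k hk hk1
    rw [Finset.mem_range, List.length_cons] at hk
    rw [degreeOne_apply_of_length_ne_one X' (by rw [List.length_take, List.length_cons]; omega),
      zero_mul]

theorem mulNC_degreeOne_apply_append_singleton (g : NCSeries ι K) (s : List ι) (j : ι) :
    mulNC g (degreeOne X') (s ++ [j]) = g s * (X' j : K) := by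
  rw [mulNC, Finset.sum_eq_single_of_mem s.length (by simp)]
  · rw [List.take_left, List.drop_left]; rfl
  · intro k hk hks
    rw [Finset.mem_range, List.length_append, List.length_singleton] at hk
    rw [degreeOne_apply_of_length_ne_one X' (by
      rw [List.length_drop, List.length_append, List.length_singleton]; omega), mul_zero]

theorem pwNC_degreeOne_apply (n : ℕ) (w : List ι) :
    pwNC (degreeOne (K := K) X') n w =
      if w.length = n then (w.map fun i => (X' i : K)).prod else 0 := by
  induction n generalizing w with
  | zero => cases w <;> rfl
  | succ n ih =>
    cases w with
    | nil => exact degreeOne_mulNC_apply_nil X' _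
    | cons i t =>
      rw [pwNC, degreeOne_mulNC_apply_cons, ih]
      split_ifs <;> simp_all

theorem seriesInNC_degreeOne_apply (a : ℕ → K) (w : List ι) :
    seriesInNC a (degreeOne X') w = a w.length * (w.map fun i => (X' i : K)).prod := by
  rw [seriesInNC, Finset.sum_eq_single_of_mem w.length (by simp)]
  · rw [pwNC_degreeOne_apply, if_pos rfl]
  · intro n _ hn
    rw [pwNC_degreeOne_apply, if_neg (Ne.symm hn), mul_zero]

theorem degreeOne_mulNC_eq_mulNC_degreeOne_iff (u : NCSeries ι K) :
    mulNC (degreeOne X') u = mulNC u (degreeOne X') ↔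
      ∀ i t j, (X' i : K) * u (t ++ [j]) = (X' j : K) * u (i :: t) := by
  constructor
  · intro h i t j
    have hw := congrFun h ((i :: t) ++ [j])
    rw [List.cons_append, degreeOne_mulNC_apply_cons, ← List.cons_append,
      mulNC_degreeOne_apply_append_singleton] at hw
    rw [hw, mul_comm]
  · intro h
    funext w
    obtain _ | ⟨i, t⟩ := w
    · rw [degreeOne_mulNC_apply_nil, mulNC_degreeOne_apply_nil]
    rw [degreeOne_mulNC_apply_cons]
    obtain rfl | ⟨s, j, rfl⟩ := t.eq_nil_or_concat'
    · rw [← List.nil_append [i], mulNC_degreeOne_apply_append_singleton, mul_comm]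
    · rw [← List.cons_append, mulNC_degreeOne_apply_append_singleton, h, mul_comm]

end DegreeOne

/-- let `H₀` be a finite-rank free `ℤ`-module (modelled as
`ι →₀ ℤ` for a finite basis type `ι`), `K` a commutative ring, and
`X' ∈ H₀` a primitive element (i.e. there is a `ℤ`-linear functional taking the
value `1` on it, equivalently `X'` is part of a `ℤ`-basis).  Then the
centralizer in `T̂` of `X = X' ⊗ 1 ∈ H` is exactly the ring `K[[X]]` of formal
power series in `X`. -/
theorem centralizer_primitive_degreeOne_eq_powerSeries
    [Fintype ι] (X' : ι →₀ ℤ)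
    (hX : ∃ φ : (ι →₀ ℤ) →ₗ[ℤ] ℤ, φ X' = 1) :
    {u : NCSeries ι K | mulNC (degreeOne X') u = mulNC u (degreeOne X')} =
      {u : NCSeries ι K | ∃ a : ℕ → K, u = seriesInNC a (degreeOne X')} := by
  obtain ⟨m, hm⟩ := exists_sum_mul_eq_one_of_primitive (R := K) hX
  ext u
  simp only [Set.mem_ofPred_eq, degreeOne_mulNC_eq_mulNC_degreeOne_iff]
  constructor
  · intro hu
    have hswap (v w : List ι) (h : v.length = w.length) :
        (v.map fun i => (X' i : K)).prod * u w = (w.map fun i => (X' i : K)).prod * u v := by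
      simpa using prod_map_mul_apply_append_swap hu h []
    refine ⟨fun n => ∑ f : Fin n → ι, (∏ k, m (f k)) * u (List.ofFn f), funext fun w => ?_⟩
    rw [seriesInNC_degreeOne_apply]
    exact apply_eq_sum_mul_prod_map hm hswap w
  · rintro ⟨a, rfl⟩ i t j
    simp only [seriesInNC_degreeOne_apply, List.length_append, List.length_cons,
      List.length_nil, List.map_append, List.map_cons, List.prod_append, List.prod_cons,
      List.map_nil, List.prod_nil]
    ring
end

section
/- Let M be a ℚ-vector space with a decreasing filtration M = F₀M ⊇ F₁M ⊇ … that is separated (⋂ₚ FₚM = 0) and complete (M ≅ lim← M/FₚM). Let (pₙ) be a sequence of natural numbers tending to infinity and (aₙ) a sequence in M with aₙ ∈ F_{pₙ}M for each n, so that for every x ∈ ℚ the series Σₙ aₙ xⁿ converges in M. If there exists an infinite subset X ⊆ ℚ such that Σₙ aₙ xⁿ = 0 for all x ∈ X, then aₙ = 0 for all n. -/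
open Finset

/-- Convergence of a sequence `s` to `L` in the topology defined by a decreasing
filtration `F` on a module: for every `k` the tail of `s - L` lies in `F k`. -/
def IsFilteredLimit {M : Type*} [AddCommGroup M] [Module ℚ M]
    (F : ℕ → Submodule ℚ M) (s : ℕ → M) (L : M) : Prop :=
  ∀ k : ℕ, ∃ N : ℕ, ∀ m : ℕ, N ≤ m → s m - L ∈ F k

/-! Since `pₙ → ∞`, for each `k` all but finitely many `aₙ` lie in `F k`, so modulo `F k` the series
is a polynomial in `x` with coefficients in `M ⧸ F k` vanishing on the infinite set `X`. Its
coefficients are therefore zero, i.e. every `aₙ` lies in every `F k`, and separation gives `aₙ = 0`. -/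

-- Applying linear functionals reduces this to `Polynomial.eq_zero_of_infinite_isRoot`.
theorem eq_zero_of_sum_pow_smul_eq_zero_on_infinite {K V : Type*} [Field K] [AddCommGroup V]
    [Module K V] {X : Set K} (hX : X.Infinite) {N : ℕ} (b : ℕ → V)
    (hb : ∀ x ∈ X, ∑ j ∈ range N, x ^ j • b j = 0) {n : ℕ} (hn : n < N) : b n = 0 := by
  refine (Module.forall_dual_apply_eq_zero_iff K (b n)).mp fun φ => ?_
  set P : Polynomial K := ∑ j ∈ range N, Polynomial.C (φ (b j)) * Polynomial.X ^ j
  have hP_eval (x : K) : P.eval x = φ (∑ j ∈ range N, x ^ j • b j) := by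
    simp only [P, Polynomial.eval_finsetSum, Polynomial.eval_mul, Polynomial.eval_C,
      Polynomial.eval_pow, Polynomial.eval_X, map_sum, map_smul, smul_eq_mul, mul_comm]
  have hP : P = 0 := P.eq_zero_of_infinite_isRoot <|
    hX.mono fun x hx => by
      simp only [Set.mem_ofPred_eq, Polynomial.IsRoot.def, hP_eval, hb x hx, map_zero]
  simpa [P, Polynomial.finsetSum_coeff, Polynomial.coeff_C_mul_X_pow, hn] using
    congrArg (Polynomial.coeff · n) hP

theorem sum_range_mem_of_tail_mem {R M : Type*} [Ring R] [AddCommGroup M] [Module R M]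
    {S : Submodule R M} {f : ℕ → M} {N : ℕ} (htail : ∀ j, N ≤ j → f j ∈ S)
    (hsums : ∃ m₀, ∀ m, m₀ ≤ m → ∑ j ∈ range m, f j ∈ S) : ∑ j ∈ range N, f j ∈ S := by
  obtain ⟨m₀, hm₀⟩ := hsums
  have hsplit := sum_range_add_sum_Ico f (le_max_left N m₀)
  have hIco : ∑ j ∈ Ico N (max N m₀), f j ∈ S :=
    S.sum_mem fun j hj => htail j (mem_Ico.mp hj).1
  have hdiff := S.sub_mem (hm₀ _ (le_max_right N m₀)) hIco
  rwa [← hsplit, add_sub_cancel_right] at hdiff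

theorem eq_zero_of_series_vanishes_on_infinite_set_general
    {M : Type*} [AddCommGroup M] [Module ℚ M]
    (F : ℕ → Submodule ℚ M)
    (hanti : ∀ n, F (n + 1) ≤ F n)
    (hsep : ∀ x : M, (∀ n, x ∈ F n) → x = 0)
    (p : ℕ → ℕ) (hp : Filter.Tendsto p Filter.atTop Filter.atTop)
    (a : ℕ → M) (ha : ∀ n, a n ∈ F (p n))
    (X : Set ℚ) (hX : X.Infinite)
    (hvanish : ∀ x ∈ X,
      IsFilteredLimit F (fun N => ∑ n ∈ Finset.range (N + 1), x ^ n • a n) 0) :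
    ∀ n, a n = 0 := by
  intro n
  refine hsep _ fun k => ?_
  obtain ⟨N₀, hN₀⟩ := (hp.eventually_ge_atTop k).exists_forall_of_atTop
  have htail (j : ℕ) (hj : max N₀ (n + 1) ≤ j) : a j ∈ F k :=
    antitone_nat_of_succ_le hanti (hN₀ j (le_of_max_le_left hj)) (ha j)
  have htrunc (x : ℚ) (hx : x ∈ X) : ∑ j ∈ range (max N₀ (n + 1)), x ^ j • a j ∈ F k := by
    refine sum_range_mem_of_tail_mem (fun j hj => (F k).smul_mem _ (htail j hj)) ?_
    obtain ⟨m₀, hm₀⟩ := hvanish x hx k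
    exact ⟨m₀ + 1, fun m hm => by
      simpa [Nat.sub_add_cancel (by omega : 1 ≤ m)] using hm₀ (m - 1) (by omega)⟩
  have hquot := eq_zero_of_sum_pow_smul_eq_zero_on_infinite hX (fun j => (F k).mkQ (a j))
    (fun x hx => by
      simp only [← map_smul, ← map_sum]
      exact (Submodule.Quotient.mk_eq_zero (F k)).mpr (htrunc x hx))
    (by omega : n < max N₀ (n + 1))
  simpa using hquot

/-- let `M` be a filtered ℚ-vector space, with decreasing, separated
and complete filtration `F`, `(pₙ)` a sequence of naturals tending to infinity and
`(aₙ)` a sequence with `aₙ ∈ F_{pₙ} M`.  If the series `Σₙ aₙ xⁿ` converges to `0`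
for all `x` in some infinite subset `X ⊆ ℚ`, then `aₙ = 0` for all `n`. -/
theorem eq_zero_of_series_vanishes_on_infinite_set
    {M : Type*} [AddCommGroup M] [Module ℚ M]
    (F : ℕ → Submodule ℚ M)
    (hF0 : F 0 = ⊤)
    (hanti : ∀ n, F (n + 1) ≤ F n)
    (hsep : ∀ x : M, (∀ n, x ∈ F n) → x = 0)
    (hcomplete : ∀ s : ℕ → M, (∀ n, s (n + 1) - s n ∈ F n) →
      ∃ L, ∀ n, ∃ N, ∀ m, N ≤ m → s m - L ∈ F n)
    (p : ℕ → ℕ) (hp : Filter.Tendsto p Filter.atTop Filter.atTop)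
    (a : ℕ → M) (ha : ∀ n, a n ∈ F (p n))
    (X : Set ℚ) (hX : X.Infinite)
    (hvanish : ∀ x ∈ X,
      IsFilteredLimit F (fun N => ∑ n ∈ Finset.range (N + 1), x ^ n • a n) 0) :
    ∀ n, a n = 0 :=
  eq_zero_of_series_vanishes_on_infinite_set_general F hanti hsep p hp a ha X hX hvanish
end

section
/- Let H be a module over a commutative ring K containing ℚ, T̂ = ∏_{m≥0} H^{⊗m} the completed tensor algebra with T̂₁ = ∏_{m≥1} H^{⊗m}, and let N: T̂ → T̂ be the K-linear cyclic symmetrization map defined by N = 0 on H^{⊗0} and N(X₁⋯Xₙ) = Σ_{i=1}^{n} Xᵢ⋯XₙX₁⋯X_{i−1} for Xⱼ ∈ H. Then the sequence 0 → K·1 ⊕ [T̂, T̂] → T̂ → N(T̂₁) → 0 is exact, i.e. the kernel of N equals K·1 plus the closure of the span of commutators [u,v] = uv − vu. -/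
variable {ι K : Type*} [CommRing K]

/-- The cyclic symmetrization `N : T̂ → T̂`, with `N = 0` on `H^{⊗0}` and
`N(X₁⋯Xₙ) = Σᵢ Xᵢ⋯XₙX₁⋯X_{i−1}` on `H^{⊗n}`; dually, on coefficient
functions, `(Nf)(w) = Σᵢ f(rotate w i)`. -/
def cyclicN (f : NCSeries ι K) : NCSeries ι K := fun w =>
  match w with
  | [] => 0
  | w => ∑ i ∈ Finset.range w.length, f (w.rotate i)

/-- The set of commutators `uv − vu` in `T̂`. -/
def ncCommutatorSet (ι K : Type*) [CommRing K] : Set (NCSeries ι K) :=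
  {z | ∃ u v : NCSeries ι K, z = mulNC u v - mulNC v u}

/-- The closure of a subset of `T̂` in the topology of the filtration by the
two-sided ideals `T̂ₚ = ∏_{m ≥ p} H^{⊗m}` (equivalently, the product topology
with `K` discrete): `f` lies in the closure of `S` iff on every finite set of
words it agrees with some element of `S`. -/
def filteredClosure (S : Set (NCSeries ι K)) : Set (NCSeries ι K) :=
  {f | ∀ L : Finset (List ι), ∃ g ∈ S, ∀ w ∈ L, f w = g w}

/-! `N` kills a commutator because cutting a cyclic word into two arcs is symmetric in the
two arcs, and `(N f)(w)` only sees the finitely many values of `f` at rotations of `w`, so `N`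
also kills the closure of the span of commutators.

Conversely let `N f = 0`; since `N 1 = 0` we may assume `f([]) = 0`. Put `g(u) = f(u) / |u|`
(this is where `ℚ ⊆ K` is needed). For a finite set `T` of words closed under rotation, every
`δ_u - δ_{rot_j u}` is a commutator `δ_x δ_y - δ_y δ_x`, and counting rotations both ways gives
`∑_{u ∈ T} ∑_{j < |u|} g(u) (δ_u - δ_{rot_j u}) = ∑_{u ∈ T} (|u| g(u) - (N g)(u)) δ_u`,
which is the restriction of `f` to `T`. -/

open Finset

namespace List

variable {α : Type*}

theorem take_eq_and_drop_eq_iff {w u v : List α} {k : ℕ} (hk : k ≤ w.length) :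
    w.take k = u ∧ w.drop k = v ↔ k = u.length ∧ w = u ++ v := by
  constructor
  · rintro ⟨rfl, rfl⟩
    exact ⟨by simp [hk], (take_append_drop k w).symm⟩
  · rintro ⟨rfl, rfl⟩
    exact ⟨take_left, drop_left⟩

theorem rotate_rotate_length_sub {l : List α} {k : ℕ} (hk : k ≤ l.length) :
    (l.rotate k).rotate (l.length - k) = l := by
  rw [rotate_rotate, Nat.add_sub_cancel' hk, rotate_length]

theorem take_rotate_length_sub {l : List α} {k : ℕ} (hk : k ≤ l.length) :
    (l.rotate k).take (l.length - k) = l.drop k := by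
  rw [rotate_eq_drop_append_take hk]
  exact take_left' (by simp)

theorem drop_rotate_length_sub {l : List α} {k : ℕ} (hk : k ≤ l.length) :
    (l.rotate k).drop (l.length - k) = l.take k := by
  rw [rotate_eq_drop_append_take hk]
  exact drop_left' (by simp)

end List

theorem Nat.sub_sub_mod_mod {n j : ℕ} (hj : j < n) : (n - (n - j) % n) % n = j := by
  rcases Nat.eq_zero_or_pos j with rfl | hj0
  · simp
  · rw [Nat.mod_eq_of_lt (by omega : n - j < n), Nat.sub_sub_self hj.le, Nat.mod_eq_of_lt hj]

section CyclicSums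

variable {α M : Type*} [AddCommMonoid M]

/-- `(i, k) ↦ ((i + k) % n, n - k)` is an involution exchanging the two sides. -/
theorem sum_rotate_take_drop_comm (w : List α) (F : List α → List α → M) :
    ∑ i ∈ range w.length, ∑ k ∈ range (w.length + 1),
        F ((w.rotate i).take k) ((w.rotate i).drop k) =
      ∑ i ∈ range w.length, ∑ k ∈ range (w.length + 1),
        F ((w.rotate i).drop k) ((w.rotate i).take k) := by
  set n := w.length
  rw [← sum_product' (f := fun i k => F ((w.rotate i).take k) ((w.rotate i).drop k)),
    ← sum_product' (f := fun i k => F ((w.rotate i).drop k) ((w.rotate i).take k))]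
  let σ : ℕ × ℕ → ℕ × ℕ := fun p => ((p.1 + p.2) % n, n - p.2)
  have hσ : ∀ p ∈ range n ×ˢ range (n + 1), σ p ∈ range n ×ˢ range (n + 1) ∧ σ (σ p) = p := by
    rintro ⟨i, k⟩ hp
    simp only [mem_product, mem_range] at hp ⊢
    refine ⟨⟨Nat.mod_lt _ (by omega), show n - k < n + 1 by omega⟩,
      Prod.ext ?_ (show n - (n - k) = k by omega)⟩
    show ((i + k) % n + (n - k)) % n = i
    rw [Nat.mod_add_mod, show i + k + (n - k) = i + n by omega, Nat.add_mod_right,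
      Nat.mod_eq_of_lt hp.1]
  refine sum_nbij' σ σ (fun p hp => (hσ p hp).1) (fun p hp => (hσ p hp).1)
    (fun p hp => (hσ p hp).2) (fun p hp => (hσ p hp).2) ?_
  rintro ⟨i, k⟩ hp
  simp only [mem_product, mem_range] at hp
  have hrot : w.rotate ((i + k) % n) = (w.rotate i).rotate k := by
    rw [List.rotate_rotate, List.rotate_mod]
  have hlen : (w.rotate i).length = n := List.length_rotate ..
  have hk : k ≤ (w.rotate i).length := by omega
  simp only [σ]
  rw [hrot, ← hlen, List.take_rotate_length_sub hk, List.drop_rotate_length_sub hk]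

/-- `(u, j) ↦ (u.rotate j, (|u| - j) % |u|)` is an involution exchanging the two sides. -/
theorem sum_sum_rotate_comm (T : Finset (List α)) (hT : ∀ u ∈ T, ∀ j, u.rotate j ∈ T)
    (F : List α → List α → M) :
    ∑ u ∈ T, ∑ j ∈ range u.length, F u (u.rotate j) =
      ∑ u ∈ T, ∑ j ∈ range u.length, F (u.rotate j) u := by
  rw [sum_sigma' T (fun u => range u.length) (fun u j => F u (u.rotate j)),
    sum_sigma' T (fun u => range u.length) (fun u j => F (u.rotate j) u)]
  have hback : ∀ u : List α, ∀ j < u.length,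
      (u.rotate j).rotate ((u.length - j) % u.length) = u := by
    intro u j hj
    rw [← List.length_rotate u j, List.rotate_mod, List.length_rotate,
      List.rotate_rotate_length_sub hj.le]
  let σ : (_ : List α) × ℕ → (_ : List α) × ℕ :=
    fun p => ⟨p.1.rotate p.2, (p.1.length - p.2) % p.1.length⟩
  have hσ : ∀ p ∈ T.sigma fun u => range u.length,
      σ p ∈ (T.sigma fun u => range u.length) ∧ σ (σ p) = p := by
    rintro ⟨u, j⟩ hp
    simp only [mem_sigma, mem_range] at hp
    refine ⟨mem_sigma.2 ⟨hT u hp.1 j, mem_range.2 ?_⟩, ?_⟩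
    · show (u.length - j) % u.length < (u.rotate j).length
      rw [List.length_rotate]
      exact Nat.mod_lt _ (by omega)
    · simp only [σ, hback u j hp.2, List.length_rotate, Nat.sub_sub_mod_mod hp.2]
  refine sum_nbij' σ σ (fun p hp => (hσ p hp).1) (fun p hp => (hσ p hp).1)
    (fun p hp => (hσ p hp).2) (fun p hp => (hσ p hp).2) ?_
  rintro ⟨u, j⟩ hp
  simp only [mem_sigma, mem_range] at hp
  simp only [σ, hback u j hp.2]

end CyclicSums

theorem exists_rotate_closed_superset {α : Type*} (L : Finset (List α)) :
    ∃ T : Finset (List α), L ⊆ T ∧ ∀ u ∈ T, ∀ j, u.rotate j ∈ T := by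
  classical
  have hmem : ∀ u w, u ~r w → w ∈ L → u ∈ L.biUnion fun w => w.cyclicPermutations.toFinset :=
    fun u w huw hw =>
      mem_biUnion.2 ⟨w, hw, List.mem_toFinset.2 (List.mem_cyclicPermutations_iff.2 huw)⟩
  refine ⟨_, fun w hw => hmem w w (List.IsRotated.refl w) hw, fun u hu j => ?_⟩
  obtain ⟨w, hw, huw⟩ := mem_biUnion.1 hu
  rw [List.mem_toFinset, List.mem_cyclicPermutations_iff] at huw
  exact hmem _ w ((List.IsRotated.forall u j).trans huw) hw

theorem cyclicN_apply (f : NCSeries ι K) (w : List ι) :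
    cyclicN f w = ∑ i ∈ range w.length, f (w.rotate i) := by
  cases w <;> simp [cyclicN]

def cyclicNₗ : NCSeries ι K →ₗ[K] NCSeries ι K where
  toFun := cyclicN
  map_add' f g := funext fun w => by simp [cyclicN_apply, sum_add_distrib]
  map_smul' c f := funext fun w => by simp [cyclicN_apply, mul_sum]

theorem cyclicN_mulNC_comm (u v : NCSeries ι K) : cyclicN (mulNC u v) = cyclicN (mulNC v u) :=
  funext fun w => by
    simpa only [cyclicN_apply, mulNC, List.length_rotate, mul_comm]
      using sum_rotate_take_drop_comm w fun a b => u a * v b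

theorem span_ncCommutatorSet_le_ker_cyclicNₗ :
    Submodule.span K (ncCommutatorSet ι K) ≤ LinearMap.ker (cyclicNₗ (ι := ι) (K := K)) := by
  rw [Submodule.span_le]
  rintro _ ⟨u, v, rfl⟩
  change cyclicNₗ (mulNC u v - mulNC v u) = 0
  rw [map_sub, sub_eq_zero]
  exact cyclicN_mulNC_comm u v

theorem cyclicN_eq_zero_of_mem_filteredClosure {S : Set (NCSeries ι K)}
    (hS : ∀ g ∈ S, cyclicN g = 0) {f : NCSeries ι K} (hf : f ∈ filteredClosure S) :
    cyclicN f = 0 := funext fun w => by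
  classical
  obtain ⟨g, hgS, hfg⟩ := hf ((range w.length).image w.rotate)
  have hrot : ∀ i ∈ range w.length, f (w.rotate i) = g (w.rotate i) :=
    fun i hi => hfg _ (mem_image_of_mem _ hi)
  rw [cyclicN_apply, sum_congr rfl hrot, ← cyclicN_apply, hS g hgS]

theorem cyclicN_oneNC : cyclicN (oneNC : NCSeries ι K) = 0 := funext fun w => by
  cases w with
  | nil => rfl
  | cons a t =>
    refine (cyclicN_apply _ _).trans (sum_eq_zero fun i _ => ?_)
    cases h : (a :: t).rotate i with
    | nil => simp at h
    | cons b s => rfl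

theorem cyclicN_smul_oneNC_add (c : K) (g : NCSeries ι K) :
    cyclicN (c • oneNC + g) = cyclicN g := by
  change cyclicNₗ (c • oneNC + g) = cyclicNₗ g
  rw [map_add, map_smul]
  change c • cyclicN oneNC + cyclicN g = cyclicN g
  rw [cyclicN_oneNC, smul_zero, zero_add]

section Single

variable [DecidableEq ι]

theorem mulNC_single_single (u v : List ι) (a b : K) :
    mulNC (Pi.single u a) (Pi.single v b) = Pi.single (u ++ v) (a * b) := funext fun w => by
  have hterm : ∀ k ∈ range (w.length + 1),
      (Pi.single u a : NCSeries ι K) (w.take k) * (Pi.single v b : NCSeries ι K) (w.drop k) =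
        if k = u.length ∧ w = u ++ v then a * b else 0 := fun k hk => by
    simp only [Pi.single_apply, ite_zero_mul_ite_zero,
      ← List.take_eq_and_drop_eq_iff (Nat.lt_succ_iff.1 (mem_range.1 hk))]
  rw [mulNC, sum_congr rfl hterm, Pi.single_apply]
  by_cases hw : w = u ++ v <;> simp [hw]

theorem single_sub_single_rotate_mem_ncCommutatorSet (w : List ι) {i : ℕ} (hi : i ≤ w.length)
    (a : K) : Pi.single w a - Pi.single (w.rotate i) a ∈ ncCommutatorSet ι K :=
  ⟨Pi.single (w.take i) a, Pi.single (w.drop i) 1, by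
    rw [mulNC_single_single, mulNC_single_single, List.take_append_drop,
      ← List.rotate_eq_drop_append_take hi, mul_one, one_mul]⟩

theorem sum_sum_single_sub_single_rotate (T : Finset (List ι))
    (hT : ∀ u ∈ T, ∀ j, u.rotate j ∈ T) (g : NCSeries ι K) :
    ∑ u ∈ T, ∑ j ∈ range u.length, (Pi.single u (g u) - Pi.single (u.rotate j) (g u)) =
      ∑ u ∈ T, Pi.single u (u.length • g u - cyclicN g u) := by
  simp only [sum_sub_distrib]
  rw [sum_sum_rotate_comm T hT fun u v => Pi.single v (g u), ← sum_sub_distrib]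
  refine sum_congr rfl fun u _ => funext fun v => ?_
  simp only [Pi.sub_apply, Finset.sum_apply, Pi.single_apply, cyclicN_apply]
  split_ifs <;> simp

theorem sum_single_mem_span_of_cyclicN_eq_zero [Algebra ℚ K] (T : Finset (List ι))
    (hT : ∀ u ∈ T, ∀ j, u.rotate j ∈ T) {f : NCSeries ι K} (hf : cyclicN f = 0) (h0 : f [] = 0) :
    ∑ u ∈ T, Pi.single u (f u) ∈ Submodule.span K (ncCommutatorSet ι K) := by
  set g : NCSeries ι K := fun u => (u.length : ℚ)⁻¹ • f u
  have hg : cyclicN g = 0 := funext fun w => by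
    rw [cyclicN_apply]
    simp only [g, List.length_rotate, ← smul_sum]
    rw [← cyclicN_apply, hf, Pi.zero_apply, smul_zero]
  have hfg : ∀ u, u.length • g u = f u := by
    rintro (_ | ⟨a, t⟩)
    · simp [h0]
    · have hlen : ((a :: t).length : ℚ) ≠ 0 := by
        rw [List.length_cons]
        positivity
      rw [← Nat.cast_smul_eq_nsmul ℚ, smul_smul, mul_inv_cancel₀ hlen, one_smul]
  have hsum := sum_sum_single_sub_single_rotate T hT g
  simp only [hg, hfg, Pi.zero_apply, sub_zero] at hsum
  rw [← hsum]
  exact sum_mem fun u _ => sum_mem fun j hj => Submodule.subset_span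
    (single_sub_single_rotate_mem_ncCommutatorSet u (mem_range.1 hj).le _)

end Single

theorem mem_filteredClosure_span_of_cyclicN_eq_zero [Algebra ℚ K] {f : NCSeries ι K}
    (hf : cyclicN f = 0) (h0 : f [] = 0) :
    f ∈ filteredClosure (Submodule.span K (ncCommutatorSet ι K) : Set (NCSeries ι K)) := by
  classical
  intro L
  obtain ⟨T, hLT, hT⟩ := exists_rotate_closed_superset L
  refine ⟨_, sum_single_mem_span_of_cyclicN_eq_zero T hT hf h0, fun w hw => ?_⟩
  rw [Finset.sum_apply, sum_pi_single, if_pos (hLT hw)]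

theorem ker_cyclicN_eq_general [Algebra ℚ K] :
    {f : NCSeries ι K | cyclicN f = 0} =
      {f : NCSeries ι K | ∃ c : K,
        ∃ g ∈ filteredClosure (↑(Submodule.span K (ncCommutatorSet ι K))),
          f = c • oneNC + g} := by
  ext f
  constructor
  · intro hf
    refine ⟨f [], f - f [] • oneNC, mem_filteredClosure_span_of_cyclicN_eq_zero ?_ ?_,
      (add_sub_cancel _ _).symm⟩
    · rwa [← cyclicN_smul_oneNC_add (f []), add_sub_cancel]
    · simp [oneNC]
  · rintro ⟨c, g, hg, rfl⟩
    change cyclicN (c • oneNC + g) = 0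
    rw [cyclicN_smul_oneNC_add]
    exact cyclicN_eq_zero_of_mem_filteredClosure
      (fun p hp => span_ncCommutatorSet_le_ker_cyclicNₗ hp) hg

/-- over a commutative ring `K ⊇ ℚ`, the sequence
`0 → K·1 ⊕ [T̂,T̂] → T̂ → N(T̂₁) → 0` is exact; that is, the kernel of the cyclic
symmetrization `N` is exactly `K·1` plus the closure of the span of
commutators. -/
theorem ker_cyclicN_eq [Fintype ι] [Algebra ℚ K] :
    {f : NCSeries ι K | cyclicN f = 0} =
      {f : NCSeries ι K | ∃ c : K,
        ∃ g ∈ filteredClosure (↑(Submodule.span K (ncCommutatorSet ι K))),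
          f = c • oneNC + g} :=
  ker_cyclicN_eq_general
end
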